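/- Let A be a finite abelian group with |A| ≡ 3 (mod 4) and let f be an admissible function on A. If the 4-graph H_f contains no copy of H(4) and has exactly ((|A|+1)/16)·C(|A|+1,3) edges (the maximum possible for an H(4)-free 4-graph on |A|+1 vertices), then (f⋆f)(x) = 1 for every nonzero x ∈ A. -/

import Mathlib

def gT {V : Type*} (e : V → V → ℤ) : V → V → V → ℤ :=
  fun x y z => e x y * e y z * e z x

def TwoGraphIso {V₁ V₂ : Type*} (g₁ : V₁ → V₁ → V₁ → ℤ) (g₂ : V₂ → V₂ → V₂ → ℤ) : Prop :=
  ∃ φ : V₁ ≃ V₂, ∀ x y z, g₂ (φ x) (φ y) (φ z) = g₁ x y z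

def restrict3 {W : Type*} (h : W → W → W → ℤ) (A : Finset W) :
    {a // a ∈ A} → {a // a ∈ A} → {a // a ∈ A} → ℤ :=
  fun x y z => h x.1 y.1 z.1

/-- The augmentation `T⁺`: a new vertex `∞` (here `none`) with all edges directed
towards it. -/
def aug {V : Type*} (e : V → V → ℤ) : Option V → Option V → ℤ
  | some a, some b => e a b
  | some _, none => 1
  | none, some _ => -1
  | none, none => 0

open scoped Classical in
noncomputable def chi {F : Type*} [Field F] [Fintype F] (x : F) : ℤ :=
  if x = 0 then 0 else if IsSquare x then 1 else -1

instance : Fact (Nat.Prime 3) := ⟨by norm_num⟩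

/-- The Paley oriented two-graph `g₃` on the `4` vertices `F₃ ∪ {∞}` (the augmented
Paley tournament for `q = 3` is `T_χ` on `ZMod 3` augmented by `∞`). -/
noncomputable def gThree : Option (ZMod 3) → Option (ZMod 3) → Option (ZMod 3) → ℤ :=
  gT (aug (fun x y : ZMod 3 => chi (y - x)))

/-- The `4`-graph `H_f` on the `|A| + 1` vertices of `T_f⁺`, whose edges are the
`4`-element subsets `X` with `g_{T_f⁺}|_X ≅ g₃`.  Here `T_f` is the tournament on `A`
with sign function `e(x,y) = f(y-x)`. -/
noncomputable def hypOf {A : Type*} [AddCommGroup A] (f : A → ℤ) :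
    Set (Finset (Option A)) :=
  {X | X.card = 4 ∧ TwoGraphIso gThree (restrict3 (gT (aug (fun x y => f (y - x)))) X)}

/-!
Let `e` be the sign function of `T_f⁺`, `N = |A| + 1` its number of vertices and
`g = g_{T_f⁺}`, an alternating ternary function. Its coboundary
`δg(a,b,c,d) = g(b,c,d) - g(a,c,d) + g(a,b,d) - g(a,b,c)` is alternating, and equals `±4` on
the `24` orderings of each edge of `H_f`, so `384 |H_f| ≤ ∑ δg²`. Expanding the square gives
`∑ δg² = 4N²(N-1)(N-2) - 12 ∑_{u,v} e(u,v)² (∑_x e(x,u) e(x,v))²`, and for the augmented Cayley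
tournament the last sum is `|A| ∑_c f(c)² (1 - (f⋆f)(c))²`. The assumed number of edges is
exactly `4N²(N-1)(N-2) / 384`, so every term of that sum vanishes.
-/

open Finset

variable {V : Type*}

structure IsAlternating (g : V → V → V → ℤ) : Prop where
  swap_left : ∀ x y z, g y x z = -g x y z
  swap_right : ∀ x y z, g x z y = -g x y z

def coboundary (g : V → V → V → ℤ) (a b c d : V) : ℤ :=
  g b c d - g a c d + g a b d - g a b c

theorem sum_rotate_four {M : Type*} [AddCommMonoid M] [Fintype V] (H : V → V → V → V → M) :
    ∑ a, ∑ b, ∑ c, ∑ d, H b c d a = ∑ a, ∑ b, ∑ c, ∑ d, H a b c d := by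
  rw [Finset.sum_comm]
  refine sum_congr rfl fun b _ ↦ ?_
  rw [Finset.sum_comm]
  refine sum_congr rfl fun c _ ↦ ?_
  rw [Finset.sum_comm]

namespace IsAlternating

variable {g : V → V → V → ℤ}

theorem rotate (hg : IsAlternating g) (x y z : V) : g y z x = g x y z := by
  rw [hg.swap_left z y x, hg.swap_right z x y, hg.swap_left x z y, hg.swap_right x y z]
  ring

theorem coboundary_swap₀₁ (hg : IsAlternating g) (a b c d : V) :
    coboundary g b a c d = -coboundary g a b c d := by
  simp only [coboundary]
  rw [hg.swap_left a b d, hg.swap_left a b c]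
  ring

theorem coboundary_swap₁₂ (hg : IsAlternating g) (a b c d : V) :
    coboundary g a c b d = -coboundary g a b c d := by
  simp only [coboundary]
  rw [hg.swap_left b c d, hg.swap_right a b c]
  ring

theorem coboundary_swap₂₃ (hg : IsAlternating g) (a b c d : V) :
    coboundary g a b d c = -coboundary g a b c d := by
  simp only [coboundary]
  rw [hg.swap_right b c d, hg.swap_right a c d]
  ring

theorem coboundary_rotate (hg : IsAlternating g) (a b c d : V) :
    coboundary g b c d a = -coboundary g a b c d := by
  simp only [coboundary]
  rw [hg.rotate a c d, hg.rotate a b d, hg.rotate a b c]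
  ring

theorem coboundary_sq_comp_perm (hg : IsAlternating g) (σ : Equiv.Perm (Fin 4))
    (v : Fin 4 → V) :
    coboundary g (v (σ 0)) (v (σ 1)) (v (σ 2)) (v (σ 3)) ^ 2
      = coboundary g (v 0) (v 1) (v 2) (v 3) ^ 2 := by
  have hσ : σ ∈ Submonoid.closure (Set.range fun i : Fin 3 ↦ Equiv.swap i.castSucc i.succ) := by
    rw [Equiv.Perm.mclosure_swap_castSucc_succ]
    trivial
  induction hσ using Submonoid.closure_induction generalizing v with
  | mem τ hτ =>
    obtain ⟨i, rfl⟩ := hτ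
    fin_cases i <;> simp +decide only [Equiv.swap_apply_def,
      if_true, if_false]
    · rw [hg.coboundary_swap₀₁, neg_sq]; rfl
    · rw [hg.coboundary_swap₁₂, neg_sq]; rfl
    · rw [hg.coboundary_swap₂₃, neg_sq]; rfl
  | one => rfl
  | mul σ τ _ _ hσ hτ => exact (hτ fun k ↦ v (σ k)).trans (hσ v)

theorem sum_coboundary_mul_rotate [Fintype V] (hg : IsAlternating g) (X : V → V → V → V → ℤ) :
    ∑ a, ∑ b, ∑ c, ∑ d, coboundary g a b c d * X b c d a
      = -∑ a, ∑ b, ∑ c, ∑ d, coboundary g a b c d * X a b c d := by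
  have hpt : ∀ a b c d, coboundary g b c d a * X b c d a
      = -(coboundary g a b c d * X b c d a) := fun a b c d ↦ by
    rw [hg.coboundary_rotate, neg_mul]
  rw [← sum_rotate_four (fun a b c d ↦ coboundary g a b c d * X a b c d)]
  simp only [hpt, sum_neg_distrib, neg_neg]

theorem sum_coboundary_mul [Fintype V] (hg : IsAlternating g) :
    ∑ a, ∑ b, ∑ c, ∑ d, coboundary g a b c d * g a b c
      = 3 * ∑ u, ∑ v, (∑ x, g x u v) ^ 2 - Fintype.card V * ∑ x, ∑ y, ∑ z, g x y z ^ 2 := by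
  have hsum_d : ∀ a b c, ∑ d, coboundary g a b c d
      = (∑ x, g x b c) - (∑ x, g x a c) + (∑ x, g x a b) - Fintype.card V * g a b c := by
    intro a b c
    simp only [coboundary, sum_add_distrib, sum_sub_distrib, sum_const, card_univ, nsmul_eq_mul,
      hg.rotate]
  have h₁ : ∑ a, ∑ b, ∑ c, (∑ x, g x b c) * g a b c = ∑ u, ∑ v, (∑ x, g x u v) ^ 2 := by
    rw [sum_comm]
    refine sum_congr rfl fun b _ ↦ ?_
    rw [sum_comm]
    exact sum_congr rfl fun c _ ↦ by rw [← mul_sum, sq]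
  have h₂ : ∑ a, ∑ b, ∑ c, (∑ x, g x a c) * g a b c = -∑ u, ∑ v, (∑ x, g x u v) ^ 2 := by
    rw [← sum_neg_distrib]
    refine sum_congr rfl fun a _ ↦ ?_
    rw [sum_comm, ← sum_neg_distrib]
    refine sum_congr rfl fun c _ ↦ ?_
    rw [← mul_sum, sum_congr rfl fun b _ ↦ hg.swap_left b a c, sum_neg_distrib, mul_neg, sq]
  have h₃ : ∑ a, ∑ b, ∑ c, (∑ x, g x a b) * g a b c = ∑ u, ∑ v, (∑ x, g x u v) ^ 2 := by
    refine sum_congr rfl fun a _ ↦ sum_congr rfl fun b _ ↦ ?_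
    rw [← mul_sum, sum_congr rfl fun c _ ↦ hg.rotate c a b, sq]
  simp only [← sum_mul, hsum_d]
  simp only [sub_mul, add_mul, sum_add_distrib, sum_sub_distrib]
  rw [h₁, h₂, h₃]
  simp only [mul_assoc, ← sq, ← mul_sum]
  ring

theorem sum_coboundary_sq [Fintype V] (hg : IsAlternating g) :
    ∑ a, ∑ b, ∑ c, ∑ d, coboundary g a b c d ^ 2
      = 4 * Fintype.card V * ∑ x, ∑ y, ∑ z, g x y z ^ 2
        - 12 * ∑ u, ∑ v, (∑ x, g x u v) ^ 2 := by
  have hexpand : ∀ a b c d, coboundary g a b c d ^ 2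
      = coboundary g a b c d * g b c d - coboundary g a b c d * g a c d
        + coboundary g a b c d * g a b d - coboundary g a b c d * g a b c := fun a b c d ↦ by
    rw [sq]; nth_rewrite 2 [coboundary]; ring
  -- A cyclic shift of the variables negates `δg`, so each face term of `δg · δg` reduces to the
  -- last one.
  have hbcd := hg.sum_coboundary_mul_rotate fun a b c _ ↦ g a b c
  have hacd := hg.sum_coboundary_mul_rotate fun _ b c d ↦ g d b c
  have habd := hg.sum_coboundary_mul_rotate fun a _ c d ↦ g d a c
  simp only [hg.rotate] at hbcd hacd habd
  simp only [hexpand, sum_add_distrib, sum_sub_distrib]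
  linear_combination 3 * hbcd - 2 * hacd + habd - 4 * hg.sum_coboundary_mul

theorem mul_ncard_le_sum_coboundary_sq [Fintype V] [DecidableEq V] (hg : IsAlternating g)
    (𝓗 : Set (Finset V)) (m : ℤ)
    (h𝓗 : ∀ X ∈ 𝓗, ∃ v : Fin 4 → V, Function.Injective v ∧ X = univ.image v ∧
      coboundary g (v 0) (v 1) (v 2) (v 3) ^ 2 = m) :
    24 * m * 𝓗.ncard ≤ ∑ a, ∑ b, ∑ c, ∑ d, coboundary g a b c d ^ 2 := by
  classical
  choose v hv_inj hv_image hv_cob using fun X : 𝓗 ↦ h𝓗 X.1 X.2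
  have himage : ∀ (X : 𝓗) (σ : Equiv.Perm (Fin 4)), univ.image (v X ∘ σ) = X := by
    intro X σ
    rw [← image_image, image_univ_equiv, hv_image]
  let Φ : 𝓗 × Equiv.Perm (Fin 4) → V × V × V × V :=
    fun p ↦ (v p.1 (p.2 0), v p.1 (p.2 1), v p.1 (p.2 2), v p.1 (p.2 3))
  have hΦ : Function.Injective Φ := by
    rintro ⟨X, σ⟩ ⟨Y, τ⟩ h
    simp only [Φ, Prod.mk.injEq] at h
    have hw : v X ∘ σ = v Y ∘ τ := funext fun i ↦ by fin_cases i <;> simp [h]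
    obtain rfl : X = Y := Subtype.ext (by rw [← himage X σ, ← himage Y τ, hw])
    rw [DFunLike.coe_injective ((hv_inj X).comp_left hw)]
  let F : V × V × V × V → ℤ := fun t ↦ coboundary g t.1 t.2.1 t.2.2.1 t.2.2.2 ^ 2
  calc 24 * m * 𝓗.ncard = ∑ _p : 𝓗 × Equiv.Perm (Fin 4), m := by
        rw [sum_const, card_univ, Fintype.card_prod, Fintype.card_perm, Fintype.card_fin,
          ← Nat.card_eq_fintype_card, Nat.card_coe_set_eq, nsmul_eq_mul]
        push_cast [Nat.factorial]
        ring
    _ = ∑ p, F (Φ p) := Fintype.sum_congr _ _ fun p ↦ by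
        rw [← hv_cob p.1]
        exact (hg.coboundary_sq_comp_perm p.2 (v p.1)).symm
    _ = ∑ t ∈ univ.map ⟨Φ, hΦ⟩, F t := (sum_map univ ⟨Φ, hΦ⟩ F).symm
    _ ≤ ∑ t, F t := sum_le_univ_sum_of_nonneg fun t ↦ sq_nonneg _
    _ = ∑ a, ∑ b, ∑ c, ∑ d, coboundary g a b c d ^ 2 := by
        simp only [F, Fintype.sum_prod_type]

end IsAlternating

structure IsTournament (e : V → V → ℤ) : Prop where
  antisymm : ∀ x y, e y x = -e x y
  sq_eq_one : ∀ x y, x ≠ y → e x y ^ 2 = 1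

theorem isAlternating_gT {e : V → V → ℤ} (he : ∀ x y, e y x = -e x y) :
    IsAlternating (gT e) where
  swap_left x y z := by simp only [gT]; rw [he x y, he y z, he z x]; ring
  swap_right x y z := by simp only [gT]; rw [he x y, he y z, he z x]; ring

theorem sum_sq_sum_gT [Fintype V] {e : V → V → ℤ} (he : ∀ x y, e y x = -e x y) :
    ∑ u, ∑ v, (∑ x, gT e x u v) ^ 2 = ∑ u, ∑ v, e u v ^ 2 * (∑ x, e x u * e x v) ^ 2 := by
  have h : ∀ u v, ∑ x, gT e x u v = -(e u v * ∑ x, e x u * e x v) := fun u v ↦ by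
    rw [mul_sum, ← sum_neg_distrib]
    exact sum_congr rfl fun x _ ↦ by rw [gT, he x v]; ring
  simp only [h, neg_sq, mul_pow]

namespace IsTournament

variable {e : V → V → ℤ}

theorem sq_eq_ite [DecidableEq V] (he : IsTournament e) (x y : V) :
    e x y ^ 2 = 1 - if x = y then 1 else 0 := by
  split_ifs with h
  · subst h
    have : e x x = 0 := by linarith [he.antisymm x x]
    simp [this]
  · simp [he.sq_eq_one x y h]

theorem sum_gT_sq [Fintype V] (he : IsTournament e) :
    ∑ x, ∑ y, ∑ z, gT e x y z ^ 2
      = Fintype.card V * (Fintype.card V - 1) * (Fintype.card V - 2) := by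
  classical
  simp only [gT, mul_pow, he.sq_eq_ite]
  simp [sub_mul, mul_sub, sum_sub_distrib, mul_ite, sum_ite_eq', sum_ite_eq]
  ring

theorem sum_coboundary_gT_sq [Fintype V] (he : IsTournament e) :
    ∑ a, ∑ b, ∑ c, ∑ d, coboundary (gT e) a b c d ^ 2
      = 4 * (Fintype.card V : ℤ) ^ 2 * (Fintype.card V - 1) * (Fintype.card V - 2)
        - 12 * ∑ u, ∑ v, e u v ^ 2 * (∑ x, e x u * e x v) ^ 2 := by
  rw [(isAlternating_gT he.antisymm).sum_coboundary_sq, he.sum_gT_sq,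
    sum_sq_sum_gT he.antisymm]
  ring

end IsTournament

theorem chi_zmod_three (x : ZMod 3) : chi x = if x = 0 then 0 else if x = 1 then 1 else -1 := by
  obtain rfl | rfl | rfl : x = 0 ∨ x = 1 ∨ x = 2 := by revert x; decide
  all_goals simp +decide [chi]

theorem coboundary_gThree : coboundary gThree none (some 0) (some 1) (some 2) = 4 := by
  simp only [coboundary, gThree, gT, aug, chi_zmod_three]
  decide

theorem exists_coboundary_eq_four_of_twoGraphIso {W : Type*} [DecidableEq W]
    {g : W → W → W → ℤ} {X : Finset W} (h : TwoGraphIso gThree (restrict3 g X)) :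
    ∃ v : Fin 4 → W, Function.Injective v ∧ X = univ.image v ∧
      coboundary g (v 0) (v 1) (v 2) (v 3) = 4 := by
  obtain ⟨φ, hφ⟩ := h
  let o : Fin 4 ≃ Option (ZMod 3) :=
    Equiv.ofBijective ![none, some 0, some 1, some 2] (by decide)
  refine ⟨fun i ↦ (φ (o i)).1, Subtype.val_injective.comp (φ.injective.comp o.injective), ?_, ?_⟩
  · ext t
    simp only [mem_image, mem_univ, true_and]
    refine ⟨fun ht ↦ ⟨o.symm (φ.symm ⟨t, ht⟩), by simp⟩, ?_⟩
    rintro ⟨i, rfl⟩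
    exact (φ (o i)).2
  · rw [← coboundary_gThree]
    simp only [coboundary]
    exact congrArg₂ _ (congrArg₂ _ (congrArg₂ _ (hφ _ _ _) (hφ _ _ _)) (hφ _ _ _)) (hφ _ _ _)

theorem IsTournament.aug {e : V → V → ℤ} (he : IsTournament e) : IsTournament (aug e) where
  antisymm
    | some _, some _ => he.antisymm _ _
    | some _, none | none, some _ | none, none => by simp [_root_.aug]
  sq_eq_one
    | some x, some y, h => he.sq_eq_one x y fun hxy ↦ h (congrArg some hxy)
    | some _, none, _ | none, some _, _ => by simp [_root_.aug]
    | none, none, h => absurd rfl h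

section Cayley

variable {A : Type*} [AddCommGroup A] {f : A → ℤ}

theorem isTournament_cayley (hzero : ∀ a, f a = 0 ↔ a = 0) (hodd : ∀ a, f (-a) = -f a)
    (hpm : ∀ a, f a = 1 ∨ f a = 0 ∨ f a = -1) : IsTournament fun x y ↦ f (y - x) where
  antisymm x y := by rw [← hodd, neg_sub]
  sq_eq_one x y hxy := by
    rcases hpm (y - x) with h | h | h
    · rw [h, one_pow]
    · exact absurd ((hzero _).mp h) (sub_ne_zero.mpr (Ne.symm hxy))
    · rw [h]; norm_num

variable [Fintype A]

theorem sum_eq_zero_of_odd (hodd : ∀ a, f (-a) = -f a) : ∑ a, f a = 0 := by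
  have h : ∑ a, f (-a) = ∑ a, f a := Fintype.sum_equiv (Equiv.neg A) _ _ fun _ ↦ rfl
  simp only [hodd, sum_neg_distrib] at h
  linarith

theorem sum_mul_sub_eq_neg_conv (hodd : ∀ a, f (-a) = -f a) (a b : A) :
    ∑ c, f (a - c) * f (b - c) = -∑ t, f (b - a - t) * f t := by
  rw [← sum_neg_distrib]
  refine Fintype.sum_equiv (Equiv.subRight a) _ _ fun c ↦ ?_
  rw [Equiv.subRight_apply, sub_sub_sub_cancel_right, ← neg_sub a c, hodd]
  ring

theorem sum_sq_mul_sq_aug_cayley (hodd : ∀ a, f (-a) = -f a) :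
    ∑ u, ∑ v, aug (fun x y ↦ f (y - x)) u v ^ 2
        * (∑ x, aug (fun x y ↦ f (y - x)) x u * aug (fun x y ↦ f (y - x)) x v) ^ 2
      = Fintype.card A * ∑ c, f c ^ 2 * (1 - ∑ a, f (c - a) * f a) ^ 2 := by
  have hshift : ∀ b, ∑ c, f (b - c) = 0 := fun b ↦ by
    rw [← sum_eq_zero_of_odd hodd]
    exact Fintype.sum_equiv (Equiv.subLeft b) _ _ fun _ ↦ rfl
  have hrow : ∀ a, ∑ b, f (b - a) ^ 2 * (1 - ∑ t, f (b - a - t) * f t) ^ 2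
      = ∑ c, f c ^ 2 * (1 - ∑ t, f (c - t) * f t) ^ 2 :=
    fun a ↦ Fintype.sum_equiv (Equiv.subRight a) _ _ fun _ ↦ rfl
  -- the row and the column of `∞` vanish because `f` sums to zero
  simp [Fintype.sum_option, aug, hshift, sum_mul_sub_eq_neg_conv hodd, ← sub_eq_add_neg, hrow]

end Cayley

theorem Nat.cast_choose_three {K : Type*} [Field K] [CharZero K] (n : ℕ) :
    (n.choose 3 : K) = n * (n - 1) * (n - 2) / 6 := by
  rw [eq_div_iff (by norm_num)]
  rcases n with _ | _ | _ | m
  · simp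
  · simp [Nat.choose_eq_zero_of_lt]
  · norm_num
  · have h : (m + 3).choose 3 * 6 = (m + 3) * (m + 2) * (m + 1) := by
      rw [show 6 = Nat.factorial 3 from rfl, mul_comm, ← Nat.descFactorial_eq_factorial_mul_choose]
      simp [Nat.descFactorial]; ring
    rw [← Nat.cast_ofNat (n := 6), ← Nat.cast_mul, h]
    push_cast; ring

theorem statement17_general (A : Type) [AddCommGroup A] [Fintype A] (f : A → ℤ)
    (hzero : ∀ a, f a = 0 ↔ a = 0)
    (hodd : ∀ a, f (-a) = - f a)
    (hpm : ∀ a, f a = 1 ∨ f a = 0 ∨ f a = -1)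
    (hcard : ((hypOf f).ncard : ℚ) =
      ((Fintype.card A : ℚ) + 1) / 16 * ((Fintype.card A + 1).choose 3 : ℚ)) :
    ∀ x : A, x ≠ 0 → ∑ a : A, f (x - a) * f a = 1 := by
  classical
  intro x hx
  set N := Fintype.card A
  have he := (isTournament_cayley hzero hodd hpm).aug
  have hedges : 384 * ((hypOf f).ncard : ℤ) = 4 * ((N : ℤ) + 1) ^ 2 * N * (N - 1) := by
    have : 384 * ((hypOf f).ncard : ℚ) = 4 * ((N : ℚ) + 1) ^ 2 * N * (N - 1) := by
      rw [hcard, Nat.cast_choose_three]; push_cast; ring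
    exact_mod_cast this
  have hbound := (isAlternating_gT he.antisymm).mul_ncard_le_sum_coboundary_sq (hypOf f) 16
    fun X hX ↦ by
      obtain ⟨v, hv_inj, hv_image, hv_cob⟩ := exists_coboundary_eq_four_of_twoGraphIso hX.2
      exact ⟨v, hv_inj, hv_image, by rw [hv_cob]; norm_num⟩
  rw [he.sum_coboundary_gT_sq, sum_sq_mul_sq_aug_cayley hodd, Fintype.card_option] at hbound
  have hN : (0 : ℤ) < N := by exact_mod_cast Fintype.card_pos
  have hsum : ∑ c, f c ^ 2 * (1 - ∑ a, f (c - a) * f a) ^ 2 = 0 := by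
    refine le_antisymm ?_ (sum_nonneg fun c _ ↦ by positivity)
    push_cast at hbound
    nlinarith
  have hx_term := (sum_eq_zero_iff_of_nonneg fun c _ ↦ by positivity).mp hsum x (mem_univ x)
  have hfx : f x ^ 2 = 1 := by
    simpa using (isTournament_cayley hzero hodd hpm).sq_eq_one 0 x hx.symm
  rw [hfx, one_mul, sq_eq_zero_iff, sub_eq_zero] at hx_term
  exact hx_term.symm

/-- let `A` be a finite abelian group with `|A| ≡ 3 (mod 4)` and `f` an
admissible function on `A`.  If the `4`-graph `H_f` contains no copy of `H(4)` (no `5`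
vertices span `3` or more edges) and has exactly `((|A|+1)/16)·C(|A|+1,3)` edges, then
`(f ⋆ f)(x) = 1` for every nonzero `x ∈ A`. -/
theorem statement17 (A : Type) [AddCommGroup A] [Fintype A]
    (hA : Fintype.card A % 4 = 3) (f : A → ℤ)
    (hzero : ∀ a, f a = 0 ↔ a = 0)
    (hodd : ∀ a, f (-a) = - f a)
    (hpm : ∀ a, f a = 1 ∨ f a = 0 ∨ f a = -1)
    (hfree : ∀ S : Finset (Option A), S.card = 5 →
      {X ∈ hypOf f | X ⊆ S}.ncard ≤ 2)
    (hcard : ((hypOf f).ncard : ℚ) =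
      ((Fintype.card A : ℚ) + 1) / 16 * ((Fintype.card A + 1).choose 3 : ℚ)) :
    ∀ x : A, x ≠ 0 → ∑ a : A, f (x - a) * f a = 1 :=
  statement17_general A f hzero hodd hpm hcard
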